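/- The graph G* produced by the vertex-cover reduction is a 1-star caterpillar convex bipartite graph: for a graph G with n vertices and m edges, G* has X* = V_2 ∪ V_3 and Y* = V_1, where V_1 = {x_i : v_i ∈ V(G)}, V_2 = {y_{i1}, y_{i2} : e_i ∈ E(G)}, V_3 = {z_{i1}, z_{i2} : e_i ∈ E(G)}, each x_i is adjacent to all of V_3 and to y_{i1}, y_{i2} for exactly those edges e_i incident on v_i; then there exists a 1-star caterpillar T on X* with backbone V_3 and pendants V_2 such that for every x ∈ Y*, N_{G*}(x) induces a subtree of T. -/

import Mathlib

/-!
The caterpillar is the path `z₁₁ z₁₂ … z_{m2}` with a pendant `y_{jt}` hung on each `z_{jt}`.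
Hanging a pendant on every vertex of a tree gives a tree, since an edge is a bridge exactly when
it is the only edge leaving some vertex set, and both the new edges and the old bridges have such
a cut. Every neighbourhood `N(x_i)` contains the whole connected backbone `V₃`, to which each of
its pendants is attached, so it induces a connected subgraph.
-/

/-- `S` is a Steiner set for terminal set `R` in `G`: the subgraph induced on `R ∪ S`
is connected. -/
def IsSteinerSet {V : Type*} (G : SimpleGraph V) (R S : Set V) : Prop :=
  (G.induce (R ∪ S)).Connected

/-- `S` is a minimum Steiner set for terminal set `R` in `G`. -/
def IsMinSteinerSet {V : Type*} (G : SimpleGraph V) (R S : Set V) : Prop :=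
  IsSteinerSet G R S ∧ ∀ S' : Set V, IsSteinerSet G R S' → S.ncard ≤ S'.ncard

/-- The bipartite graph on `α ⊕ β` determined by the cross-adjacency relation `A`. -/
def biGraph {α β : Type*} (A : α → β → Prop) : SimpleGraph (α ⊕ β) where
  Adj u v := (∃ a b, u = .inl a ∧ v = .inr b ∧ A a b) ∨ (∃ a b, u = .inr b ∧ v = .inl a ∧ A a b)
  symm := ⟨by
    rintro u v (⟨a,b,h1,h2,h3⟩|⟨a,b,h1,h2,h3⟩)
    · exact Or.inr ⟨a,b,h2,h1,h3⟩
    · exact Or.inl ⟨a,b,h2,h1,h3⟩⟩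
  loopless := ⟨by rintro (a|b) (⟨x,y,h1,h2,_⟩|⟨x,y,h1,h2,_⟩) <;> simp_all⟩

namespace SimpleGraph

variable {V : Type*} {G : SimpleGraph V}

theorem isBridge_iff_exists_cut {u v : V} :
    G.IsBridge s(u, v) ↔ ∃ S : Set V, u ∈ S ∧ v ∉ S ∧
      ∀ x y, G.Adj x y → x ∈ S → y ∉ S → s(x, y) = s(u, v) := by
  rw [isBridge_iff]
  constructor
  · intro huv
    refine ⟨{x | (G.deleteEdges {s(u, v)}).Reachable u x}, Reachable.refl u, huv, ?_⟩
    intro x y hxy hx hy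
    by_contra hne
    exact hy (hx.trans (deleteEdges_adj.mpr ⟨hxy, hne⟩).reachable)
  · rintro ⟨S, hu, hv, hcut⟩ ⟨p⟩
    obtain ⟨d, -, hd₁, hd₂⟩ := p.exists_boundary_dart S hu hv
    obtain ⟨hadj, hne⟩ := deleteEdges_adj.mp d.adj
    exact hne (hcut _ _ hadj hd₁ hd₂)

theorem pathGraph_isAcyclic (n : ℕ) : (pathGraph n).IsAcyclic := by
  have hbridge : ∀ u v : Fin n, u.val + 1 = v.val → (pathGraph n).IsBridge s(u, v) := by
    intro u v huv
    refine isBridge_iff_exists_cut.mpr ⟨Set.Iic u, le_refl u, ?_, ?_⟩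
    · simp only [Set.mem_Iic, Fin.le_def]
      omega
    intro x y hxy hx hy
    simp only [Set.mem_Iic, Fin.le_def, not_le] at hx hy
    rw [pathGraph_adj] at hxy
    have hxu : x = u := by ext; omega
    have hyv : y = v := by ext; omega
    rw [hxu, hyv]
  rw [isAcyclic_iff_forall_adj_isBridge]
  intro u v huv
  rcases pathGraph_adj.mp huv with h | h
  · exact hbridge u v h
  · rw [Sym2.eq_swap]
    exact hbridge v u h

theorem pathGraph_isTree {n : ℕ} (hn : n ≠ 0) : (pathGraph n).IsTree := by
  obtain ⟨k, rfl⟩ := Nat.exists_eq_succ_of_ne_zero hn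
  exact ⟨pathGraph_connected k, pathGraph_isAcyclic _⟩

variable {β : Type*} (H : SimpleGraph β)

/-- `H` with a pendant vertex `inl s` attached to each vertex `inr s`. -/
def withPendants : SimpleGraph (β ⊕ β) where
  Adj u v := match u, v with
    | .inr s, .inr t => H.Adj s t
    | .inl s, .inr t => s = t
    | .inr s, .inl t => s = t
    | .inl _, .inl _ => False
  symm := ⟨by rintro (s | s) (t | t) h <;> simp_all [H.adj_comm]⟩
  loopless := ⟨by rintro (s | s) h <;> simp_all⟩

variable {H}

@[simp] lemma withPendants_adj_inr_inr {s t : β} :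
    (withPendants H).Adj (.inr s) (.inr t) ↔ H.Adj s t := .rfl

@[simp] lemma withPendants_adj_inl_inr {s t : β} :
    (withPendants H).Adj (.inl s) (.inr t) ↔ s = t := .rfl

@[simp] lemma withPendants_adj_inr_inl {s t : β} :
    (withPendants H).Adj (.inr s) (.inl t) ↔ s = t := .rfl

@[simp] lemma withPendants_not_adj_inl_inl {s t : β} :
    ¬(withPendants H).Adj (.inl s) (.inl t) := id

theorem withPendants_induce_connected (hH : H.Connected) {S : Set (β ⊕ β)}
    (hS : ∀ s, .inr s ∈ S) : ((withPendants H).induce S).Connected := by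
  let backbone : H →g (withPendants H).induce S :=
    { toFun := fun s => ⟨.inr s, hS s⟩, map_rel' := fun h => h }
  have hbackbone : ∀ s t, ((withPendants H).induce S).Reachable (backbone s) (backbone t) :=
    fun s t => (hH.preconnected s t).map backbone
  have hpendant : ∀ x : S, ∃ s, ((withPendants H).induce S).Reachable x (backbone s) := by
    rintro ⟨s | s, hx⟩
    · exact ⟨s, Adj.reachable (G := (withPendants H).induce S) rfl⟩
    · exact ⟨s, Reachable.refl _⟩
  have : Nonempty S := ⟨backbone hH.nonempty.some⟩
  refine Connected.mk fun x y => ?_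
  obtain ⟨s, hs⟩ := hpendant x
  obtain ⟨t, ht⟩ := hpendant y
  exact hs.trans ((hbackbone s t).trans ht.symm)

theorem withPendants_connected (hH : H.Connected) : (withPendants H).Connected :=
  (induceUnivIso _).connected_iff.mp
    (withPendants_induce_connected hH fun _ => Set.mem_univ _)

theorem withPendants_isBridge_pendant (s : β) :
    (withPendants H).IsBridge s(.inl s, .inr s) := by
  refine isBridge_iff_exists_cut.mpr ⟨{.inl s}, rfl, by simp, ?_⟩
  rintro x y hxy rfl hy
  rcases y with t | t
  · exact (withPendants_not_adj_inl_inl hxy).elim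
  · rw [withPendants_adj_inl_inr.mp hxy]

theorem withPendants_isBridge_backbone {s t : β} (hst : H.IsBridge s(s, t)) :
    (withPendants H).IsBridge s(.inr s, .inr t) := by
  obtain ⟨S, hs, ht, hcut⟩ := isBridge_iff_exists_cut.mp hst
  refine isBridge_iff_exists_cut.mpr ⟨Sum.elim id id ⁻¹' S, hs, ht, ?_⟩
  rintro (x | x) (y | y) hxy hx hy
  · exact (withPendants_not_adj_inl_inl hxy).elim
  · rw [withPendants_adj_inl_inr] at hxy
    subst hxy
    exact absurd hx hy
  · rw [withPendants_adj_inr_inl] at hxy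
    subst hxy
    exact absurd hx hy
  · simpa using hcut x y hxy hx hy

theorem withPendants_isAcyclic (hH : H.IsAcyclic) : (withPendants H).IsAcyclic := by
  rw [isAcyclic_iff_forall_adj_isBridge]
  rintro (s | s) (t | t) huv
  · exact (withPendants_not_adj_inl_inl huv).elim
  · rw [withPendants_adj_inl_inr] at huv
    subst huv
    exact withPendants_isBridge_pendant s
  · rw [withPendants_adj_inr_inl] at huv
    subst huv
    rw [Sym2.eq_swap]
    exact withPendants_isBridge_pendant s
  · exact withPendants_isBridge_backbone (isAcyclic_iff_forall_adj_isBridge.mp hH huv)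

theorem withPendants_isTree (hH : H.IsTree) : (withPendants H).IsTree :=
  ⟨withPendants_connected hH.connected, withPendants_isAcyclic hH.isAcyclic⟩

end SimpleGraph

open SimpleGraph

/-- The path `z₁₁ z₁₂ z₂₁ z₂₂ … z_{m1} z_{m2}`, numbering `z_{jt}` as `2j + t`. -/
def caterpillarBackbone (m : ℕ) : SimpleGraph (Fin m × Fin 2) :=
  (pathGraph (m * 2)).comap finProdFinEquiv

theorem caterpillarBackbone_isTree {m : ℕ} (hm : 1 ≤ m) : (caterpillarBackbone m).IsTree :=
  (Iso.comap _ _).isTree_iff.mpr (pathGraph_isTree (by omega))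

theorem fromRel_caterpillar_eq (m : ℕ) :
    SimpleGraph.fromRel (fun u v : (Fin m × Fin 2) ⊕ (Fin m × Fin 2) =>
        (∃ s t : Fin m × Fin 2, u = .inr s ∧ v = .inr t ∧
          2 * (s.1 : ℕ) + (s.2 : ℕ) + 1 = 2 * (t.1 : ℕ) + (t.2 : ℕ)) ∨
        (∃ s : Fin m × Fin 2, u = .inl s ∧ v = .inr s)) =
      withPendants (caterpillarBackbone m) := by
  ext (s | s) (t | t)
  · simp
  · simp only [fromRel_adj, withPendants_adj_inl_inr]
    aesop
  · simp only [fromRel_adj, withPendants_adj_inr_inl]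
    aesop
  · simp only [fromRel_adj, ne_eq, Sum.inr.injEq, reduceCtorEq, false_and, exists_false,
      or_false, exists_and_left, exists_eq_left', withPendants_adj_inr_inr, caterpillarBackbone,
      comap_adj, pathGraph_adj, finProdFinEquiv_apply_val]
    constructor
    · rintro ⟨-, h | h⟩ <;> omega
    · intro h
      refine ⟨?_, by omega⟩
      rintro rfl
      omega

theorem stmt14_general {n m : ℕ} (hm : 1 ≤ m)
    (a b : Fin m → Fin n) :
    (SimpleGraph.fromRel (fun u v : (Fin m × Fin 2) ⊕ (Fin m × Fin 2) =>
        (∃ s t : Fin m × Fin 2, u = .inr s ∧ v = .inr t ∧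
          2 * (s.1 : ℕ) + (s.2 : ℕ) + 1 = 2 * (t.1 : ℕ) + (t.2 : ℕ)) ∨
        (∃ s : Fin m × Fin 2, u = .inl s ∧ v = .inr s))).IsTree ∧
    ∀ i : Fin n,
      ((SimpleGraph.fromRel (fun u v : (Fin m × Fin 2) ⊕ (Fin m × Fin 2) =>
          (∃ s t : Fin m × Fin 2, u = .inr s ∧ v = .inr t ∧
            2 * (s.1 : ℕ) + (s.2 : ℕ) + 1 = 2 * (t.1 : ℕ) + (t.2 : ℕ)) ∨
          (∃ s : Fin m × Fin 2, u = .inl s ∧ v = .inr s))).induce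
        {x : (Fin m × Fin 2) ⊕ (Fin m × Fin 2) |
          Sum.elim (fun jt => a jt.1 = i ∨ b jt.1 = i) (fun _ => True) x}).Connected := by
  have hbackbone := caterpillarBackbone_isTree hm
  rw [fromRel_caterpillar_eq]
  exact ⟨withPendants_isTree hbackbone,
    fun _ => withPendants_induce_connected hbackbone.connected fun _ => trivial⟩

/-- The vertex-cover reduction graph is a 1-star caterpillar convex bipartite graph:
with `X* = V₂ ⊕ V₃` (`Sum.inl` the pendants `y_{j1}, y_{j2}`, `Sum.inr` the backbone
`z_{j1}, z_{j2}`) and each `x_i ∈ Y* = V₁` adjacent to all of `V₃` and to `y_{j1}, y_{j2}`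
for exactly the edges `e_j` incident to `v_i`, the 1-star caterpillar `T` on `X*` with
backbone `V₃` (in order `z_{11}, z_{12}, z_{21}, …`) and pendant `y_{jt}` attached to
`z_{jt}` is a tree in which every neighborhood `N(x_i)` induces a connected subgraph. -/
theorem stmt14 {n m : ℕ} (hm : 1 ≤ m) (G : SimpleGraph (Fin n))
    (a b : Fin m → Fin n) (hedges : ∀ j, G.Adj (a j) (b j)) :
    (SimpleGraph.fromRel (fun u v : (Fin m × Fin 2) ⊕ (Fin m × Fin 2) =>
        (∃ s t : Fin m × Fin 2, u = .inr s ∧ v = .inr t ∧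
          2 * (s.1 : ℕ) + (s.2 : ℕ) + 1 = 2 * (t.1 : ℕ) + (t.2 : ℕ)) ∨
        (∃ s : Fin m × Fin 2, u = .inl s ∧ v = .inr s))).IsTree ∧
    ∀ i : Fin n,
      ((SimpleGraph.fromRel (fun u v : (Fin m × Fin 2) ⊕ (Fin m × Fin 2) =>
          (∃ s t : Fin m × Fin 2, u = .inr s ∧ v = .inr t ∧
            2 * (s.1 : ℕ) + (s.2 : ℕ) + 1 = 2 * (t.1 : ℕ) + (t.2 : ℕ)) ∨
          (∃ s : Fin m × Fin 2, u = .inl s ∧ v = .inr s))).induce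
        {x : (Fin m × Fin 2) ⊕ (Fin m × Fin 2) |
          Sum.elim (fun jt => a jt.1 = i ∨ b jt.1 = i) (fun _ => True) x}).Connected :=
  stmt14_general hm a b
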